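/- arXiv:1901.10180 — 2 statements merged into one kernel-verified Lean document; each statement's English description precedes it below -/
import Mathlib

section
/- If G is a connected graph on n vertices and u,v are nonadjacent vertices, then the distance α-spectral radius of G + uv is strictly less than that of G. -/
open Finset Matrix

namespace DistAlpha

variable {V : Type*} [Fintype V] [DecidableEq V]

/-- The distance matrix of a graph, with real entries. -/
noncomputable def distMatrix (G : SimpleGraph V) : Matrix V V ℝ :=
  fun u v => (G.dist u v : ℝ)

/-- The transmission of a vertex: the sum of distances to all vertices. -/
noncomputable def transmission (G : SimpleGraph V) (u : V) : ℝ :=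
  ∑ v, (G.dist u v : ℝ)

/-- The matrix `D_α = α T + (1-α) D`. -/
noncomputable def Dalpha (G : SimpleGraph V) (α : ℝ) : Matrix V V ℝ :=
  α • Matrix.diagonal (transmission G) + (1 - α) • distMatrix G

/-- The distance α-spectral radius: the largest (real) eigenvalue of `D_α`. -/
noncomputable def muAlpha (G : SimpleGraph V) (α : ℝ) : ℝ :=
  sSup (spectrum ℝ (Dalpha G α))

/-- The transmission of a graph: sum of distances over unordered pairs. -/
noncomputable def sigma (G : SimpleGraph V) : ℝ :=
  (∑ u, ∑ v, (G.dist u v : ℝ)) / 2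

/-- A graph is transmission regular if all vertex transmissions are equal. -/
def TransmissionRegular (G : SimpleGraph V) : Prop :=
  ∀ u v : V, transmission G u = transmission G v

/-! ### Auxiliary spectral lemmas for real symmetric matrices -/

section Spectral

variable {n : Type*} [Fintype n] [DecidableEq n]

lemma eigen_le_sSup {A : Matrix n n ℝ} (hA : A.IsHermitian) (i : n) :
    hA.eigenvalues i ≤ sSup (spectrum ℝ A) := by
  apply le_csSup
  · exact (Matrix.finite_real_spectrum).bddAbove
  · exact hA.eigenvalues_mem_spectrum_real i

lemma exists_sSup_eigen [Nonempty n] {A : Matrix n n ℝ} (hA : A.IsHermitian) :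
    ∃ i, hA.eigenvalues i = sSup (spectrum ℝ A) := by
  have h1 : spectrum ℝ A = Set.range hA.eigenvalues := hA.spectrum_real_eq_range_eigenvalues
  have h2 : sSup (spectrum ℝ A) ∈ spectrum ℝ A := by
    apply Set.Nonempty.csSup_mem
    · rw [h1]; exact Set.range_nonempty _
    · exact Matrix.finite_real_spectrum
  rw [h1] at h2
  obtain ⟨i, hi⟩ := h2
  exact ⟨i, by rw [hi, h1]⟩

lemma posSemidef_sub {A : Matrix n n ℝ} (hA : A.IsHermitian) :
    (sSup (spectrum ℝ A) • (1 : Matrix n n ℝ) - A).PosSemidef := by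
  set μ := sSup (spectrum ℝ A) with hμ
  have key : μ • (1 : Matrix n n ℝ) - A =
      (hA.eigenvectorUnitary : Matrix n n ℝ) * diagonal (fun i => μ - hA.eigenvalues i) *
        (hA.eigenvectorUnitary : Matrix n n ℝ)ᴴ := by
    have hsp := hA.spectral_theorem
    have hU : (hA.eigenvectorUnitary : Matrix n n ℝ) * (hA.eigenvectorUnitary : Matrix n n ℝ)ᴴ
        = 1 := by
      simpa [star_eq_conjTranspose] using (Unitary.mul_star_self_of_mem hA.eigenvectorUnitary.2)
    have hdiag : diagonal (fun i => μ - hA.eigenvalues i)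
        = μ • (1 : Matrix n n ℝ) - diagonal (RCLike.ofReal ∘ hA.eigenvalues) := by
      ext i j
      by_cases h : i = j
      · subst h; simp [Matrix.diagonal_apply, Matrix.one_apply]
      · simp [Matrix.diagonal_apply, Matrix.one_apply, h]
    have h1 : (hA.eigenvectorUnitary : Matrix n n ℝ) * (μ • (1 : Matrix n n ℝ))
        * (hA.eigenvectorUnitary : Matrix n n ℝ)ᴴ = μ • (1 : Matrix n n ℝ) := by
      rw [mul_smul_comm, smul_mul_assoc, mul_one, hU]
    calc μ • (1 : Matrix n n ℝ) - A
        = (hA.eigenvectorUnitary : Matrix n n ℝ) * (μ • (1 : Matrix n n ℝ))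
            * (hA.eigenvectorUnitary : Matrix n n ℝ)ᴴ
          - (hA.eigenvectorUnitary : Matrix n n ℝ) * diagonal (RCLike.ofReal ∘ hA.eigenvalues)
            * (hA.eigenvectorUnitary : Matrix n n ℝ)ᴴ := by
          rw [h1, ← star_eq_conjTranspose, ← Unitary.conjStarAlgAut_apply (S := ℝ), ← hsp]
      _ = (hA.eigenvectorUnitary : Matrix n n ℝ)
            * (μ • (1 : Matrix n n ℝ) - diagonal (RCLike.ofReal ∘ hA.eigenvalues))
            * (hA.eigenvectorUnitary : Matrix n n ℝ)ᴴ := by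
          rw [mul_sub, sub_mul]
      _ = (hA.eigenvectorUnitary : Matrix n n ℝ) * diagonal (fun i => μ - hA.eigenvalues i)
            * (hA.eigenvectorUnitary : Matrix n n ℝ)ᴴ := by rw [hdiag]
  rw [key]
  exact (posSemidef_diagonal_iff.mpr
    (fun i => sub_nonneg.mpr (eigen_le_sSup hA i))).mul_mul_conjTranspose_same _

lemma rayleigh_le {A : Matrix n n ℝ} (hA : A.IsHermitian) (y : n → ℝ) :
    y ⬝ᵥ A *ᵥ y ≤ sSup (spectrum ℝ A) * (y ⬝ᵥ y) := by
  have h := (posSemidef_sub hA).dotProduct_mulVec_nonneg y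
  rw [star_trivial] at h
  rw [sub_mulVec, smul_mulVec, one_mulVec, dotProduct_sub, dotProduct_smul,
    smul_eq_mul] at h
  linarith

lemma eigen_of_rayleigh_eq {A : Matrix n n ℝ} (hA : A.IsHermitian) (y : n → ℝ)
    (h : y ⬝ᵥ A *ᵥ y = sSup (spectrum ℝ A) * (y ⬝ᵥ y)) :
    A *ᵥ y = sSup (spectrum ℝ A) • y := by
  have h0 : star y ⬝ᵥ (sSup (spectrum ℝ A) • (1 : Matrix n n ℝ) - A) *ᵥ y = 0 := by
    rw [star_trivial, sub_mulVec, smul_mulVec, one_mulVec, dotProduct_sub,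
      dotProduct_smul, smul_eq_mul, h, sub_self]
  have := ((posSemidef_sub hA).dotProduct_mulVec_zero_iff y).mp h0
  rw [sub_mulVec, smul_mulVec, one_mulVec, sub_eq_zero] at this
  exact this.symm

lemma exists_top_eigenvector [Nonempty n] {A : Matrix n n ℝ} (hA : A.IsHermitian) :
    ∃ x : n → ℝ, x ≠ 0 ∧ A *ᵥ x = sSup (spectrum ℝ A) • x := by
  obtain ⟨i, hi⟩ := exists_sSup_eigen hA
  refine ⟨⇑(hA.eigenvectorBasis i), ?_, by rw [← hi]; exact hA.mulVec_eigenvectorBasis i⟩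
  intro h
  exact hA.eigenvectorBasis.toBasis.ne_zero i (by simpa using congrArg (WithLp.toLp 2) h)

end Spectral

/-! ### Auxiliary lemmas about `Dalpha` -/

lemma Dalpha_apply (G : SimpleGraph V) (α : ℝ) (i j : V) :
    Dalpha G α i j = α * (if i = j then transmission G i else 0) + (1 - α) * (G.dist i j : ℝ) := by
  simp [Dalpha, distMatrix, Matrix.add_apply, Matrix.smul_apply, Matrix.diagonal_apply,
    smul_eq_mul]

omit [DecidableEq V] in
lemma transmission_nonneg (G : SimpleGraph V) (i : V) : 0 ≤ transmission G i :=
  Finset.sum_nonneg fun _ _ => Nat.cast_nonneg _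

lemma isHermitian_Dalpha (G : SimpleGraph V) (α : ℝ) : (Dalpha G α).IsHermitian := by
  show (Dalpha G α)ᴴ = Dalpha G α
  ext i j
  rw [Matrix.conjTranspose_apply, star_trivial, Dalpha_apply, Dalpha_apply]
  by_cases h : i = j
  · subst h; simp
  · simp [h, Ne.symm h, SimpleGraph.dist_comm]

lemma Dalpha_nonneg (G : SimpleGraph V) {α : ℝ} (hα0 : 0 ≤ α) (hα1 : α < 1) (i j : V) :
    0 ≤ Dalpha G α i j := by
  rw [Dalpha_apply]
  have h1 : (0:ℝ) ≤ α * (if i = j then transmission G i else 0) := by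
    by_cases h : i = j <;> simp [h]
    · exact mul_nonneg hα0 (transmission_nonneg G j)
  have h2 : (0:ℝ) ≤ (1 - α) * (G.dist i j : ℝ) :=
    mul_nonneg (by linarith) (Nat.cast_nonneg _)
  linarith

/-- adding an edge between nonadjacent vertices strictly decreases the
distance α-spectral radius. -/
theorem muAlpha_add_edge_lt (G : SimpleGraph V) (hG : G.Connected)
    (α : ℝ) (hα0 : 0 ≤ α) (hα1 : α < 1) (u v : V) (huv : u ≠ v)
    (hadj : ¬ G.Adj u v) :
    muAlpha (G ⊔ SimpleGraph.fromEdgeSet {s(u, v)}) α < muAlpha G α := by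
  classical
  have : Nonempty V := ⟨u⟩
  set G' : SimpleGraph V := G ⊔ SimpleGraph.fromEdgeSet {s(u, v)} with hG'def
  have hle : G ≤ G' := le_sup_left
  have hG' : G'.Connected := hG.mono hle
  have hdist_le : ∀ a b : V, G'.dist a b ≤ G.dist a b := fun a b =>
    (hG.preconnected a b).dist_anti hle
  have hadj' : G'.Adj u v := by
    rw [hG'def, SimpleGraph.sup_adj]
    right
    rw [SimpleGraph.fromEdgeSet_adj]
    exact ⟨Set.mem_singleton _, huv⟩
  have hd'uv : G'.dist u v = 1 := SimpleGraph.dist_eq_one_iff_adj.mpr hadj'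
  have hduv : 2 ≤ G.dist u v := by
    have h0 : 0 < G.dist u v := hG.pos_dist_of_ne huv
    have h1 : G.dist u v ≠ 1 := fun h => hadj (SimpleGraph.dist_eq_one_iff_adj.mp h)
    omega
  set A : Matrix V V ℝ := Dalpha G α with hA_def
  set A' : Matrix V V ℝ := Dalpha G' α with hA'_def
  have hA : A.IsHermitian := isHermitian_Dalpha G α
  have hA' : A'.IsHermitian := isHermitian_Dalpha G' α
  have hα1' : (0:ℝ) < 1 - α := by linarith
  -- entrywise comparisons
  have hT : ∀ i, transmission G' i ≤ transmission G i := fun i =>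
    Finset.sum_le_sum fun j _ => Nat.cast_le.mpr (hdist_le i j)
  have hentry_le : ∀ i j, A' i j ≤ A i j := by
    intro i j
    rw [hA_def, hA'_def, Dalpha_apply, Dalpha_apply]
    have h1 : α * (if i = j then transmission G' i else 0)
        ≤ α * (if i = j then transmission G i else 0) := by
      by_cases h : i = j <;> simp [h]
      · exact mul_le_mul_of_nonneg_left (hT j) hα0
    have h2 : (1 - α) * (G'.dist i j : ℝ) ≤ (1 - α) * (G.dist i j : ℝ) :=
      mul_le_mul_of_nonneg_left (Nat.cast_le.mpr (hdist_le i j)) (le_of_lt hα1')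
    linarith
  have hentry_uv : A' u v < A u v := by
    rw [hA_def, hA'_def, Dalpha_apply, Dalpha_apply]
    simp only [if_neg huv, mul_zero, zero_add]
    apply mul_lt_mul_of_pos_left _ hα1'
    rw [hd'uv]
    exact_mod_cast by omega
  have hoff_pos : ∀ w z : V, w ≠ z → 0 < A' w z := by
    intro w z hwz
    rw [hA'_def, Dalpha_apply]
    simp only [if_neg hwz, mul_zero, zero_add]
    apply mul_pos hα1'
    exact_mod_cast hG'.pos_dist_of_ne hwz
  have hA'_nonneg : ∀ i j, 0 ≤ A' i j := fun i j => Dalpha_nonneg G' hα0 hα1 i j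
  -- top eigenvector of A'
  set μ' : ℝ := sSup (spectrum ℝ A') with hμ'_def
  set μ : ℝ := sSup (spectrum ℝ A) with hμ_def
  obtain ⟨x, hx0, hxe⟩ := exists_top_eigenvector hA'
  set y : V → ℝ := fun i => |x i| with hy_def
  have hy0 : ∀ i, 0 ≤ y i := fun i => abs_nonneg _
  have expand : ∀ (M : Matrix V V ℝ) (z : V → ℝ),
      z ⬝ᵥ M *ᵥ z = ∑ i, ∑ j, z i * (M i j * z j) := by
    intro M z
    simp [dotProduct, Matrix.mulVec, Finset.mul_sum]
  have hyy : y ⬝ᵥ y = x ⬝ᵥ x := by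
    simp only [dotProduct, hy_def, abs_mul_abs_self]
  have hxAx : x ⬝ᵥ A' *ᵥ x = μ' * (x ⬝ᵥ x) := by
    rw [hxe, dotProduct_smul, smul_eq_mul]
  have hstep : μ' * (y ⬝ᵥ y) ≤ y ⬝ᵥ A' *ᵥ y := by
    rw [hyy, ← hxAx, expand, expand]
    apply Finset.sum_le_sum
    intro i _
    apply Finset.sum_le_sum
    intro j _
    calc x i * (A' i j * x j) ≤ |x i * (A' i j * x j)| := le_abs_self _
      _ = y i * (A' i j * y j) := by
          rw [abs_mul, abs_mul, abs_of_nonneg (hA'_nonneg i j)]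
  have heq : y ⬝ᵥ A' *ᵥ y = μ' * (y ⬝ᵥ y) := le_antisymm (rayleigh_le hA' y) hstep
  have hye : A' *ᵥ y = μ' • y := eigen_of_rayleigh_eq hA' y heq
  -- positivity of y
  have hypos : ∀ i, 0 < y i := by
    intro w
    rcases (hy0 w).lt_or_eq with h | h
    · exact h
    exfalso
    have hw : (A' *ᵥ y) w = 0 := by
      rw [hye, Pi.smul_apply, ← h, smul_eq_mul, mul_zero]
    have hsum : ∑ z, A' w z * y z = 0 := by
      rw [← hw]; rfl
    have hz : ∀ z ∈ Finset.univ, A' w z * y z = 0 :=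
      (Finset.sum_eq_zero_iff_of_nonneg fun z _ =>
        mul_nonneg (hA'_nonneg w z) (hy0 z)).mp hsum
    apply hx0
    funext z
    by_cases hzw : z = w
    · subst hzw
      exact abs_eq_zero.mp h.symm
    · have := hz z (Finset.mem_univ z)
      have hpos := hoff_pos w z (Ne.symm hzw)
      have hyz : y z = 0 := by
        by_contra hyz
        exact (mul_ne_zero (ne_of_gt hpos) hyz) this
      exact abs_eq_zero.mp hyz
  -- strict comparison of quadratic forms
  have hQ : y ⬝ᵥ A' *ᵥ y < y ⬝ᵥ A *ᵥ y := by
    rw [expand, expand]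
    apply Finset.sum_lt_sum
    · intro i _
      apply Finset.sum_le_sum
      intro j _
      exact mul_le_mul_of_nonneg_left
        (mul_le_mul_of_nonneg_right (hentry_le i j) (hy0 j)) (hy0 i)
    · refine ⟨u, Finset.mem_univ u, ?_⟩
      apply Finset.sum_lt_sum
      · intro j _
        exact mul_le_mul_of_nonneg_left
          (mul_le_mul_of_nonneg_right (hentry_le u j) (hy0 j)) (hy0 u)
      · refine ⟨v, Finset.mem_univ v, ?_⟩
        apply mul_lt_mul_of_pos_left _ (hypos u)
        exact mul_lt_mul_of_pos_right hentry_uv (hypos v)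
  have hyy_pos : 0 < y ⬝ᵥ y := by
    have : 0 < y u * y u := mul_pos (hypos u) (hypos u)
    have hterm : ∀ i ∈ Finset.univ, (0:ℝ) ≤ y i * y i := fun i _ =>
      mul_nonneg (hy0 i) (hy0 i)
    calc (0:ℝ) < y u * y u := this
      _ ≤ ∑ i, y i * y i := Finset.single_le_sum hterm (Finset.mem_univ u)
      _ = y ⬝ᵥ y := rfl
  have final : μ' * (y ⬝ᵥ y) < μ * (y ⬝ᵥ y) :=
    lt_of_lt_of_le (heq ▸ hQ) (rayleigh_le hA y)
  have : μ' < μ := lt_of_mul_lt_mul_right final hyy_pos.le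
  exact this

end DistAlpha
end

section
/- For a connected graph G on n vertices, every eigenvalue λ of D_α(G) other than the distance α-spectral radius satisfies 2α·T_min(G) − T_max(G) + (1−α)(n−2) ≤ λ ≤ T_max(G) − (1−α)n. -/
open Finset Matrix

namespace DistAlpha

variable {V : Type*} [Fintype V] [DecidableEq V]

/-- Any element of the real spectrum of a real matrix has an eigenvector. -/
lemma exists_eigvec {M : Matrix V V ℝ} {μ : ℝ} (h : μ ∈ spectrum ℝ M) :
    ∃ x : V → ℝ, x ≠ 0 ∧ M *ᵥ x = μ • x := by
  rw [← AlgEquiv.spectrum_eq (Matrix.toLinAlgEquiv (Pi.basisFun ℝ V)) M,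
    ← Module.End.hasEigenvalue_iff_mem_spectrum] at h
  obtain ⟨x, hx⟩ := h.exists_hasEigenvector
  refine ⟨x, hx.right, ?_⟩
  have hax := hx.apply_eq_smul
  have : Matrix.toLinAlgEquiv (Pi.basisFun ℝ V) M x = M *ᵥ x := rfl
  rwa [this] at hax

/-- Quadratic form bound for a symmetric entrywise-nonnegative matrix with
bounded row sums. -/
lemma quad_abs_le (B : Matrix V V ℝ) (hsym : ∀ u v, B u v = B v u)
    (h0 : ∀ u v, 0 ≤ B u v) (r : ℝ) (hr : ∀ u, ∑ v, B u v ≤ r) (x : V → ℝ) :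
    |x ⬝ᵥ (B *ᵥ x)| ≤ r * (x ⬝ᵥ x) := by
  have hxx : x ⬝ᵥ x = ∑ u, x u ^ 2 := by
    simp [dotProduct, sq]
  have expand : x ⬝ᵥ (B *ᵥ x) = ∑ u, ∑ v, B u v * (x u * x v) := by
    simp only [dotProduct, mulVec, Finset.mul_sum]
    exact Finset.sum_congr rfl fun u _ => Finset.sum_congr rfl fun v _ => by ring
  have main : ∀ f : V → ℝ, (∀ u, 0 ≤ f u) →
      (∑ u, ∑ v, B u v * f u) ≤ r * ∑ u, f u := by
    intro f hf
    calc ∑ u, ∑ v, B u v * f u = ∑ u, (∑ v, B u v) * f u := by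
          simp [Finset.sum_mul]
      _ ≤ ∑ u, r * f u :=
          Finset.sum_le_sum fun u _ => mul_le_mul_of_nonneg_right (hr u) (hf u)
      _ = r * ∑ u, f u := by rw [Finset.mul_sum]
  have main2 : ∀ f : V → ℝ, (∀ u, 0 ≤ f u) →
      (∑ u, ∑ v, B u v * f v) ≤ r * ∑ u, f u := by
    intro f hf
    rw [Finset.sum_comm]
    calc ∑ v, ∑ u, B u v * f v = ∑ v, ∑ u, B v u * f v :=
          Finset.sum_congr rfl fun v _ => Finset.sum_congr rfl fun u _ => by rw [hsym]
      _ ≤ r * ∑ v, f v := main f hf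
  rw [expand, hxx]
  calc |∑ u, ∑ v, B u v * (x u * x v)|
      ≤ ∑ u, |∑ v, B u v * (x u * x v)| := Finset.abs_sum_le_sum_abs _ _
    _ ≤ ∑ u, ∑ v, |B u v * (x u * x v)| :=
        Finset.sum_le_sum fun u _ => Finset.abs_sum_le_sum_abs _ _
    _ ≤ ∑ u, ∑ v, (B u v * (x u ^ 2 / 2) + B u v * (x v ^ 2 / 2)) := by
        refine Finset.sum_le_sum fun u _ => Finset.sum_le_sum fun v _ => ?_
        rw [abs_mul, abs_of_nonneg (h0 u v), abs_mul, ← mul_add]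
        refine mul_le_mul_of_nonneg_left ?_ (h0 u v)
        nlinarith [sq_nonneg (|x u| - |x v|), sq_abs (x u), sq_abs (x v)]
    _ = (∑ u, ∑ v, B u v * (x u ^ 2 / 2)) + ∑ u, ∑ v, B u v * (x v ^ 2 / 2) := by
        simp [Finset.sum_add_distrib]
    _ ≤ r * (∑ u, x u ^ 2 / 2) + r * (∑ u, x u ^ 2 / 2) := by
        refine add_le_add (main _ fun u => by positivity) (main2 _ fun u => by positivity)
    _ = r * ∑ u, x u ^ 2 := by
        rw [← Finset.sum_div]; ring

/-- every eigenvalue `λ` of `D_α(G)` other than the distance α-spectral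
radius satisfies `2α T_min - T_max + (1-α)(n-2) ≤ λ ≤ T_max - (1-α) n`. -/
theorem eigenvalue_bounds (G : SimpleGraph V) (hG : G.Connected)
    (α : ℝ) (hα0 : 0 ≤ α) (hα1 : α < 1) (Tmin Tmax : ℝ)
    (hlb : ∀ u, Tmin ≤ transmission G u) (hlbex : ∃ u, transmission G u = Tmin)
    (hub : ∀ u, transmission G u ≤ Tmax) (hubex : ∃ u, transmission G u = Tmax)
    (lam : ℝ) (hlam : lam ∈ spectrum ℝ (Dalpha G α)) (hne : lam ≠ muAlpha G α) :
    2 * α * Tmin - Tmax + (1 - α) * ((Fintype.card V : ℝ) - 2) ≤ lam ∧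
      lam ≤ Tmax - (1 - α) * (Fintype.card V : ℝ) := by
  classical
  have h1α : (0:ℝ) < 1 - α := by linarith
  set n : ℝ := (Fintype.card V : ℝ) with hn
  set M := Dalpha G α with hM
  set T := transmission G with hT
  set c : ℝ := α * Tmin - (1 - α) with hc
  set r : ℝ := α * (Tmax - Tmin) + (1 - α) * (Tmax - (n - 1)) with hr
  -- entries of M
  have hMentry : ∀ u v, M u v = α * (if u = v then T u else 0) + (1 - α) * (G.dist u v : ℝ) := by
    intro u v
    simp [hM, Dalpha, Matrix.add_apply, Matrix.smul_apply, Matrix.diagonal_apply,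
      distMatrix, smul_eq_mul, hT]
  have hMsymm : ∀ u v, M u v = M v u := by
    intro u v
    rw [hMentry, hMentry, SimpleGraph.dist_comm]
    by_cases h : u = v
    · subst h; rfl
    · rw [if_neg h, if_neg (Ne.symm h)]
  -- the nonnegative part B
  set B : Matrix V V ℝ := Matrix.of (fun u v => M u v - (if u = v then c else 0) - (1 - α))
    with hB
  have hdist1 : ∀ u v : V, u ≠ v → (1:ℝ) ≤ (G.dist u v : ℝ) := by
    intro u v h
    have := hG.pos_dist_of_ne h
    exact_mod_cast this
  have hB0 : ∀ u v, 0 ≤ B u v := by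
    intro u v
    by_cases h : u = v
    · subst h
      simp only [hB, Matrix.of_apply, if_pos rfl, hMentry, SimpleGraph.dist_self,
        Nat.cast_zero, hc, if_true, eq_self_iff_true]
      nlinarith [mul_nonneg hα0 (sub_nonneg.mpr (hlb u))]
    · simp only [hB, Matrix.of_apply, if_neg h, hMentry]
      nlinarith [mul_nonneg h1α.le (sub_nonneg.mpr (hdist1 u v h))]
  have hBsymm : ∀ u v, B u v = B v u := by
    intro u v
    simp only [hB, Matrix.of_apply, hMsymm u v]
    by_cases h : u = v
    · subst h; rfl
    · rw [if_neg h, if_neg (Ne.symm h)]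
  have hBrow : ∀ u, ∑ v, B u v ≤ r := by
    intro u
    have hMrow : ∑ v, M u v = T u := by
      simp only [hMentry]
      rw [Finset.sum_add_distrib, ← Finset.mul_sum, ← Finset.mul_sum,
        Finset.sum_ite_eq Finset.univ u (fun _ => T u)]
      have : ∑ v, (G.dist u v : ℝ) = T u := rfl
      rw [this]
      simp only [Finset.mem_univ, if_pos]
      ring
    have hsum : ∑ v, B u v = T u - c - n * (1 - α) := by
      simp only [hB, Matrix.of_apply]
      rw [Finset.sum_sub_distrib, Finset.sum_sub_distrib,
        Finset.sum_ite_eq Finset.univ u (fun _ => c), hMrow, Finset.sum_const]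
      simp only [Finset.mem_univ, if_pos, Finset.card_univ, nsmul_eq_mul, hn]
    rw [hsum, hc, hr]
    have := hub u
    have := hlb u
    nlinarith [h1α]
  -- the quadratic form of M
  have hquadM : ∀ y : V → ℝ,
      y ⬝ᵥ (M *ᵥ y) = c * (y ⬝ᵥ y) + (1 - α) * ((∑ u, y u) * (∑ u, y u)) + y ⬝ᵥ (B *ᵥ y) := by
    intro y
    have hMeq : ∀ u v, M u v = B u v + (if u = v then c else 0) + (1 - α) := by
      intro u v; simp only [hB, Matrix.of_apply]; ring
    have h1 : ∀ u, (M *ᵥ y) u = (B *ᵥ y) u + c * y u + (1 - α) * ∑ v, y v := by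
      intro u
      show ∑ v, M u v * y v = _
      calc ∑ v, M u v * y v
          = ∑ v, (B u v * y v + (if u = v then c * y v else 0) + (1 - α) * y v) := by
            refine Finset.sum_congr rfl fun v _ => ?_
            rw [hMeq]
            by_cases h : u = v
            · subst h; simp; ring
            · rw [if_neg h, if_neg h]; ring
        _ = (∑ v, B u v * y v) + (∑ v, if u = v then c * y v else 0) + ∑ v, (1 - α) * y v := by
            rw [Finset.sum_add_distrib, Finset.sum_add_distrib]
        _ = (B *ᵥ y) u + c * y u + (1 - α) * ∑ v, y v := by
            rw [Finset.sum_ite_eq Finset.univ u (fun v => c * y v), ← Finset.mul_sum]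
            simp only [Finset.mem_univ, if_pos]
            rfl
    calc y ⬝ᵥ (M *ᵥ y)
        = ∑ u, (y u * (B *ᵥ y) u + c * (y u * y u) + ((1 - α) * ∑ v, y v) * y u) := by
          simp only [dotProduct]
          refine Finset.sum_congr rfl fun u _ => ?_
          rw [h1 u]; ring
      _ = (∑ u, y u * (B *ᵥ y) u) + c * (∑ u, y u * y u) + ((1 - α) * ∑ v, y v) * ∑ u, y u := by
          rw [Finset.sum_add_distrib, Finset.sum_add_distrib, ← Finset.mul_sum, ← Finset.mul_sum]
      _ = c * (y ⬝ᵥ y) + (1 - α) * ((∑ u, y u) * (∑ u, y u)) + y ⬝ᵥ (B *ᵥ y) := by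
          simp only [dotProduct]
          ring
  -- eigenvectors
  obtain ⟨x, hx0, hxe⟩ := exists_eigvec hlam
  have hfin : (spectrum ℝ M).Finite := Matrix.finite_spectrum M
  have hnempty : (spectrum ℝ M).Nonempty := ⟨lam, hlam⟩
  have hmuEq : muAlpha G α = sSup (spectrum ℝ M) := by rw [hM]; rfl
  set μ := muAlpha G α with hmu
  have hmu_mem : μ ∈ spectrum ℝ M := by rw [hmuEq]; exact hnempty.csSup_mem hfin
  have hlam_le : lam ≤ μ := by rw [hmuEq]; exact le_csSup hfin.bddAbove hlam
  obtain ⟨v, hv0, hve⟩ := exists_eigvec hmu_mem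
  -- positivity of dot products
  have hdotnn : ∀ y : V → ℝ, 0 ≤ y ⬝ᵥ y :=
    fun y => Finset.sum_nonneg fun u _ => mul_self_nonneg (y u)
  have hpos : ∀ y : V → ℝ, y ≠ 0 → 0 < y ⬝ᵥ y := by
    intro y hy
    refine lt_of_le_of_ne (hdotnn y) fun h => hy ?_
    exact dotProduct_self_eq_zero.mp h.symm
  -- orthogonality of x and v
  have hMT : Mᵀ = M := Matrix.ext fun u w => hMsymm w u
  have hsymDot : ∀ a b : V → ℝ, (M *ᵥ a) ⬝ᵥ b = a ⬝ᵥ (M *ᵥ b) := by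
    intro a b
    rw [Matrix.dotProduct_mulVec a M b, ← Matrix.mulVec_transpose, hMT]
  have hxv : x ⬝ᵥ v = 0 := by
    have h1 : lam * (x ⬝ᵥ v) = μ * (x ⬝ᵥ v) := by
      calc lam * (x ⬝ᵥ v) = (lam • x) ⬝ᵥ v := by rw [smul_dotProduct]; rfl
        _ = (M *ᵥ x) ⬝ᵥ v := by rw [hxe]
        _ = x ⬝ᵥ (M *ᵥ v) := hsymDot x v
        _ = x ⬝ᵥ (μ • v) := by rw [hve]
        _ = μ * (x ⬝ᵥ v) := by rw [dotProduct_smul]; rfl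
    have h2 : (lam - μ) * (x ⬝ᵥ v) = 0 := by rw [sub_mul, h1, sub_self]
    exact (mul_eq_zero.mp h2).resolve_left (sub_ne_zero.mpr hne)
  have hvx : v ⬝ᵥ x = 0 := by rw [dotProduct_comm]; exact hxv
  have hXpos : 0 < x ⬝ᵥ x := hpos x hx0
  -- lower bound
  have h7x := quad_abs_le B hBsymm hB0 r hBrow x
  have hMx : x ⬝ᵥ (M *ᵥ x) = lam * (x ⬝ᵥ x) := by rw [hxe, dotProduct_smul]; rfl
  have hlow : (c - r) * (x ⬝ᵥ x) ≤ lam * (x ⬝ᵥ x) := by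
    have hq := hquadM x
    rw [hMx] at hq
    have habs := (abs_le.mp h7x).1
    nlinarith [mul_nonneg h1α.le (mul_self_nonneg (∑ u, x u))]
  have hlow' : c - r ≤ lam := le_of_mul_le_mul_right hlow hXpos
  -- upper bound
  have claim : ∀ a b : ℝ, a • x + b • v ≠ 0 → a * (∑ u, x u) + b * (∑ u, v u) = 0 →
      lam ≤ c + r := by
    intro a b hy0 hysum
    set y : V → ℝ := a • x + b • v with hy
    have hysum' : ∑ u, y u = 0 := by
      rw [hy]
      simp only [Pi.add_apply, Pi.smul_apply, smul_eq_mul]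
      rw [Finset.sum_add_distrib, ← Finset.mul_sum, ← Finset.mul_sum]
      exact hysum
    have hMy : M *ᵥ y = (a * lam) • x + (b * μ) • v := by
      rw [hy, Matrix.mulVec_add, Matrix.mulVec_smul, Matrix.mulVec_smul, hxe, hve,
        smul_smul, smul_smul]
    have hyy : y ⬝ᵥ y = a * a * (x ⬝ᵥ x) + b * b * (v ⬝ᵥ v) := by
      rw [hy]
      simp only [dotProduct_add, add_dotProduct, dotProduct_smul, smul_dotProduct,
        smul_eq_mul, hxv, hvx]
      ring
    have hyMy : y ⬝ᵥ (M *ᵥ y) = a * a * lam * (x ⬝ᵥ x) + b * b * μ * (v ⬝ᵥ v) := by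
      rw [hMy, hy]
      simp only [dotProduct_add, add_dotProduct, dotProduct_smul, smul_dotProduct,
        smul_eq_mul, hxv, hvx]
      ring
    have h5 : lam * (y ⬝ᵥ y) ≤ y ⬝ᵥ (M *ᵥ y) := by
      rw [hyy, hyMy]
      nlinarith [mul_nonneg (mul_nonneg (mul_self_nonneg b) (hdotnn v))
        (sub_nonneg.mpr hlam_le)]
    have h6 := hquadM y
    rw [hysum'] at h6
    have h7 := (abs_le.mp (quad_abs_le B hBsymm hB0 r hBrow y)).2
    have hYpos : 0 < y ⬝ᵥ y := hpos y hy0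
    have h8 : lam * (y ⬝ᵥ y) ≤ (c + r) * (y ⬝ᵥ y) := by nlinarith
    exact le_of_mul_le_mul_right h8 hYpos
  have hup : lam ≤ c + r := by
    by_cases hSv : (∑ u, v u) = 0
    · refine claim 0 1 ?_ ?_
      · simpa using hv0
      · simp [hSv]
    · refine claim (∑ u, v u) (-(∑ u, x u)) ?_ (by ring)
      intro h
      have hxd : x ⬝ᵥ ((∑ u, v u) • x + (-(∑ u, x u)) • v) = (∑ u, v u) * (x ⬝ᵥ x) := by
        simp only [dotProduct_add, dotProduct_smul, smul_eq_mul, hxv]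
        ring
      rw [h, dotProduct_zero] at hxd
      exact hSv ((mul_eq_zero.mp hxd.symm).resolve_right (ne_of_gt hXpos))
  constructor
  · have hcr : c - r = 2 * α * Tmin - Tmax + (1 - α) * (n - 2) := by rw [hc, hr]; ring
    linarith
  · have hcr : c + r = Tmax - (1 - α) * n := by rw [hc, hr]; ring
    linarith

end DistAlpha
end
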